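/- arXiv:2307.01859 — 8 statements merged into one kernel-verified Lean document; each statement's English description precedes it below -/
import Mathlib

section
/- Let x, z ∈ ℝ^n be vectors with entries in {-1,1} (no zero entries) that are orthogonal to each other and both orthogonal to the all-ones vector. Then n ≡ 0 (mod 4). -/
/-! The product `(1 + xᵢ)(1 + zᵢ)` of two `±1` entries is `4` when both are `1` and `0` otherwise,
so `∑ᵢ (1 + xᵢ)(1 + zᵢ)` is four times the number of indices where `x` and `z` are both `1`.
Expanding the same sum gives `n + ∑ᵢ xᵢ + ∑ᵢ zᵢ + x ⬝ᵥ z`, which is `n` under the orthogonality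
assumptions. -/

open Matrix Finset

section

variable {ι R : Type*} [Fintype ι]

theorem sum_one_add_mul_one_add [CommSemiring R] (x z : ι → R) :
    ∑ i, (1 + x i) * (1 + z i) = Fintype.card ι + ∑ i, x i + ∑ i, z i + x ⬝ᵥ z := by
  simp only [dotProduct, mul_add, add_mul, one_mul, mul_one, sum_add_distrib, sum_const, card_univ,
    nsmul_one]
  ring

theorem one_add_mul_one_add_of_pm_one [CommRing R] [DecidableEq R] {a b : R} (ha : a = 1 ∨ a = -1)
    (hb : b = 1 ∨ b = -1) : (1 + a) * (1 + b) = if a = 1 ∧ b = 1 then 4 else 0 := by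
  split_ifs with h
  · rw [h.1, h.2]
    norm_num
  · rcases ha with rfl | rfl
    · rcases hb with rfl | rfl
      · exact absurd ⟨rfl, rfl⟩ h
      · ring
    · ring

theorem sum_one_add_mul_one_add_of_pm_one [CommRing R] [DecidableEq R] {x z : ι → R}
    (hx : ∀ i, x i = 1 ∨ x i = -1) (hz : ∀ i, z i = 1 ∨ z i = -1) :
    ∑ i, (1 + x i) * (1 + z i) = 4 * #{i | x i = 1 ∧ z i = 1} := by
  rw [sum_congr rfl fun i _ => one_add_mul_one_add_of_pm_one (hx i) (hz i), ← sum_filter,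
    sum_const, nsmul_eq_mul, mul_comm]

end

/-- If `x, z ∈ ℝⁿ` have all entries `±1`, are orthogonal to each other, and are
both orthogonal to the all-ones vector, then `n ≡ 0 (mod 4)`. -/
theorem mod_four_of_two_orthogonal_pm_one_vectors {n : ℕ} (x z : Fin n → ℝ)
    (hx : ∀ i, x i = 1 ∨ x i = -1)
    (hz : ∀ i, z i = 1 ∨ z i = -1)
    (hxz : x ⬝ᵥ z = 0)
    (hx1 : ∑ i, x i = 0)
    (hz1 : ∑ i, z i = 0) :
    n % 4 = 0 := by
  have hcount := sum_one_add_mul_one_add_of_pm_one hx hz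
  rw [sum_one_add_mul_one_add, hx1, hz1, hxz, Fintype.card_fin] at hcount
  have hn : n = 4 * #{i | x i = 1 ∧ z i = 1} := by
    simp only [add_zero] at hcount
    exact_mod_cast hcount
  omega
end

section
/- There is no 5×5 matrix P with entries in {-1,0,1}, pairwise orthogonal nonzero columns, whose first column is the all-ones vector. -/
/-!
The argument works for every odd prime order `p`. As the columns of `P` are orthogonal,
`PᵀP` is diagonal, so `(det P)² = ∏ⱼ ‖Pⱼ‖²`. The first column has squared norm `p`. Every other
column sums to zero, being orthogonal to the all-ones column, so its squared norm (the
number of its nonzero entries, and `x² ≡ x mod 2`) is even, positive and at most `p`, hence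
prime to `p`. Thus the integer `(det P)²` is divisible by `p` exactly once, which is absurd.
-/

open Matrix

variable {n R : Type*} [Fintype n]

theorem Matrix.det_sq_eq_prod_dotProduct_self [DecidableEq n] [CommRing R] (M : Matrix n n R)
    (horth : Pairwise fun j k => Mᵀ j ⬝ᵥ Mᵀ k = 0) :
    M.det ^ 2 = ∏ j, Mᵀ j ⬝ᵥ Mᵀ j := by
  have hgram : Mᵀ * M = diagonal fun j => Mᵀ j ⬝ᵥ Mᵀ j := by
    ext j k
    change Mᵀ j ⬝ᵥ Mᵀ k = _
    rcases eq_or_ne j k with rfl | hjk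
    · simp
    · simpa [diagonal_apply_ne _ hjk] using horth hjk
  rw [← det_diagonal, ← hgram, det_mul, det_transpose, sq]

theorem Int.even_dotProduct_self_of_sum_eq_zero (v : n → ℤ) (hv : ∑ i, v i = 0) :
    Even (v ⬝ᵥ v) := by
  have hsplit : v ⬝ᵥ v = ∑ i, v i * (v i - 1) + ∑ i, v i := by
    simp only [dotProduct, ← Finset.sum_add_distrib]
    ring_nf
  rw [hsplit, hv, add_zero]
  exact Finset.even_sum _ fun i _ => Int.even_mul_pred_self (v i)

theorem Int.dotProduct_self_le_card (v : n → ℤ) (hv : ∀ i, v i = -1 ∨ v i = 0 ∨ v i = 1) :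
    v ⬝ᵥ v ≤ Fintype.card n := by
  have hle : ∀ i ∈ Finset.univ, v i * v i ≤ 1 := fun i _ => by
    rcases hv i with h | h | h <;> simp [h]
  simpa [dotProduct] using Finset.sum_le_card_nsmul _ _ _ hle

theorem dotProduct_self_pos [Ring R] [LinearOrder R] [IsStrictOrderedRing R] {v : n → R}
    (hv : v ≠ 0) : 0 < v ⬝ᵥ v :=
  (Fintype.sum_nonneg fun i => mul_self_nonneg (v i)).lt_of_ne' (dotProduct_self_eq_zero.not.mpr hv)

theorem Prime.sq_ne_mul_of_not_dvd [CommMonoidWithZero R] [IsCancelMulZero R] {p m : R}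
    (hp : Prime p) (hm : ¬ p ∣ m) (d : R) : d ^ 2 ≠ p * m := by
  intro hd
  have hpd : p ∣ d := hp.dvd_of_dvd_pow (hd ▸ dvd_mul_right p m)
  obtain ⟨c, rfl⟩ := hpd
  have hpm : p * (p * c ^ 2) = p * m := by rw [← hd, mul_pow, sq p, mul_assoc]
  exact hm ⟨c ^ 2, (mul_left_cancel₀ hp.ne_zero hpm).symm⟩

theorem Int.not_card_dvd_dotProduct_self (hodd : Odd (Fintype.card n)) {v : n → ℤ}
    (hv : ∀ i, v i = -1 ∨ v i = 0 ∨ v i = 1) (hsum : ∑ i, v i = 0) (hnz : v ≠ 0) :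
    ¬ (Fintype.card n : ℤ) ∣ v ⬝ᵥ v := by
  intro hdvd
  have hpos := dotProduct_self_pos hnz
  have heq : v ⬝ᵥ v = Fintype.card n :=
    le_antisymm (Int.dotProduct_self_le_card v hv) (Int.le_of_dvd hpos hdvd)
  have heven := Int.even_dotProduct_self_of_sum_eq_zero v hsum
  rw [heq] at heven
  exact Int.not_even_iff_odd.mpr (by exact_mod_cast hodd) heven

theorem Matrix.not_pairwise_orthogonal_columns_of_card_prime [DecidableEq n]
    (hp : (Fintype.card n).Prime) (hodd : Odd (Fintype.card n)) {M : Matrix n n ℤ}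
    (hent : ∀ i j, M i j = -1 ∨ M i j = 0 ∨ M i j = 1) (hnz : ∀ j, Mᵀ j ≠ 0)
    {j₀ : n} (hone : ∀ i, M i j₀ = 1) :
    ¬ Pairwise fun j k => Mᵀ j ⬝ᵥ Mᵀ k = 0 := by
  intro horth
  set p := Fintype.card n
  have hpZ : Prime (p : ℤ) := Nat.prime_iff_prime_int.mp hp
  have hfirst : Mᵀ j₀ ⬝ᵥ Mᵀ j₀ = p := by simp [dotProduct, hone, p]
  have hrest : ¬ (p : ℤ) ∣ ∏ j ∈ {j₀}ᶜ, Mᵀ j ⬝ᵥ Mᵀ j := by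
    rw [hpZ.dvd_finsetProd_iff]
    rintro ⟨j, hj, hdvd⟩
    have hj₀ : j₀ ≠ j := Ne.symm (by simpa using hj)
    have hsum : ∑ i, M i j = 0 := by simpa [dotProduct, hone] using horth hj₀
    exact Int.not_card_dvd_dotProduct_self hodd (fun i => hent i j) hsum (hnz j) hdvd
  apply Prime.sq_ne_mul_of_not_dvd hpZ hrest M.det
  rw [det_sq_eq_prod_dotProduct_self M horth, Fintype.prod_eq_mul_prod_compl j₀, hfirst]

/-- There is no `5 × 5` matrix with entries in `{-1,0,1}`, pairwise orthogonal
nonzero columns, and first column the all-ones vector. -/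
theorem no_normalized_weak_hadamard_dim_five :
    ¬ ∃ P : Matrix (Fin 5) (Fin 5) ℝ,
      (∀ i j, P i j = -1 ∨ P i j = 0 ∨ P i j = 1) ∧
      (∀ j k : Fin 5, j ≠ k → Pᵀ j ⬝ᵥ Pᵀ k = 0) ∧
      (∀ j : Fin 5, Pᵀ j ≠ 0) ∧
      (∀ i, P i 0 = 1) := by
  rintro ⟨P, hent, horth, hnz, hone⟩
  have hint (i j : Fin 5) : ∃ z : ℤ, (z : ℝ) = P i j := by
    rcases hent i j with h | h | h
    exacts [⟨-1, by simp [h]⟩, ⟨0, by simp [h]⟩, ⟨1, by simp [h]⟩]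
  choose M hM using hint
  have hentM (i j : Fin 5) : M i j = -1 ∨ M i j = 0 ∨ M i j = 1 := by
    have h := hent i j
    rw [← hM] at h
    exact_mod_cast h
  have hnzM (j : Fin 5) : Mᵀ j ≠ 0 := fun hj => hnz j <| funext fun i => by
    have h : M i j = 0 := congrFun hj i
    simp [← hM, h]
  have honeM (i : Fin 5) : M i 0 = 1 := by exact_mod_cast (hM i 0).trans (hone i)
  refine not_pairwise_orthogonal_columns_of_card_prime (by norm_num) (by decide) hentM hnzM honeM
    fun j k hjk => ?_
  have h := horth j k hjk
  simp only [dotProduct, transpose_apply, ← hM] at h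
  exact_mod_cast h
end

section
/- Let A be an m×m weak Hadamard matrix and B an n×n weak Hadamard matrix, and suppose the columns of A are pairwise orthogonal. Then the Kronecker product A ⊗ B is a weak Hadamard matrix. -/
/-!
The Gram matrix of a Kronecker product is the Kronecker product of the Gram matrices,
`(A ⊗ B)ᵀ(A ⊗ B) = AᵀA ⊗ BᵀB`. Orthogonality of the columns of `A` makes `AᵀA` diagonal, so the
entry at `((a, b), (a', b'))` vanishes unless `a = a'`; and when `a = a'`, positions `a * n + b`
and `a * n + b'` are more than one apart exactly when `b` and `b'` are, where `BᵀB` vanishes.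
-/

open Matrix Kronecker

/-- A tridiagonality predicate with respect to the natural linear ordering. -/
def TridiagFin {N : ℕ} (M : Matrix (Fin N) (Fin N) ℝ) : Prop :=
  ∀ i j : Fin N, ((i : ℕ) + 1 < (j : ℕ) ∨ (j : ℕ) + 1 < (i : ℕ)) → M i j = 0

theorem mul_mem_neg_one_zero_one {R : Type*} [NonAssocRing R] {x y : R}
    (hx : x = -1 ∨ x = 0 ∨ x = 1) (hy : y = -1 ∨ y = 0 ∨ y = 1) :
    x * y = -1 ∨ x * y = 0 ∨ x * y = 1 := by
  rcases hx with rfl | rfl | rfl <;> rcases hy with rfl | rfl | rfl <;> simp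

theorem Matrix.kronecker_transpose_mul_self {R l m n p : Type*} [CommSemiring R]
    [Fintype l] [Fintype n] (A : Matrix l m R) (B : Matrix n p R) :
    (A ⊗ₖ B)ᵀ * (A ⊗ₖ B) = (Aᵀ * A) ⊗ₖ (Bᵀ * B) := by
  rw [← kroneckerMap_transpose, ← mul_kronecker_mul]

theorem Matrix.isDiag_transpose_mul_self {R m n : Type*} [Fintype m] [NonUnitalNonAssocSemiring R]
    {A : Matrix m n R} (hA : ∀ j k, j ≠ k → Aᵀ j ⬝ᵥ Aᵀ k = 0) : (Aᵀ * A).IsDiag :=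
  fun j k hjk => (mul_apply' ..).trans (hA j k hjk)

theorem kronecker_apply_eq_zero_of_isDiag_of_tridiagFin {m n : ℕ}
    {D : Matrix (Fin m) (Fin m) ℝ} {T : Matrix (Fin n) (Fin n) ℝ}
    (hD : D.IsDiag) (hT : TridiagFin T) (p q : Fin m × Fin n)
    (hpq : (p.1 : ℕ) * n + (p.2 : ℕ) + 1 < (q.1 : ℕ) * n + (q.2 : ℕ) ∨
      (q.1 : ℕ) * n + (q.2 : ℕ) + 1 < (p.1 : ℕ) * n + (p.2 : ℕ)) :
    (D ⊗ₖ T) p q = 0 := by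
  obtain ⟨a, b⟩ := p
  obtain ⟨a', b'⟩ := q
  rw [kronecker_apply]
  by_cases ha : a = a'
  · subst ha
    dsimp only at hpq
    rw [hT b b' (by omega), mul_zero]
  · rw [hD ha, zero_mul]

theorem kronecker_weak_hadamard_general {m n : ℕ}
    (A : Matrix (Fin m) (Fin m) ℝ) (B : Matrix (Fin n) (Fin n) ℝ)
    (hAent : ∀ i j, A i j = -1 ∨ A i j = 0 ∨ A i j = 1)
    (hAorth : ∀ j k : Fin m, j ≠ k → Aᵀ j ⬝ᵥ Aᵀ k = 0)
    (hBent : ∀ i j, B i j = -1 ∨ B i j = 0 ∨ B i j = 1)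
    (hBtri : TridiagFin (Bᵀ * B)) :
    (∀ p q, (A ⊗ₖ B) p q = -1 ∨ (A ⊗ₖ B) p q = 0 ∨ (A ⊗ₖ B) p q = 1) ∧
      (∀ p q : Fin m × Fin n,
        ((p.1 : ℕ) * n + (p.2 : ℕ) + 1 < (q.1 : ℕ) * n + (q.2 : ℕ) ∨
          (q.1 : ℕ) * n + (q.2 : ℕ) + 1 < (p.1 : ℕ) * n + (p.2 : ℕ)) →
        ((A ⊗ₖ B)ᵀ * (A ⊗ₖ B)) p q = 0) := by
  refine ⟨fun p q => mul_mem_neg_one_zero_one (hAent _ _) (hBent _ _), fun p q hpq => ?_⟩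
  rw [kronecker_transpose_mul_self]
  exact kronecker_apply_eq_zero_of_isDiag_of_tridiagFin (isDiag_transpose_mul_self hAorth) hBtri
    p q hpq

/-- If `A` is a weak Hadamard matrix with pairwise orthogonal columns and `B` is a
weak Hadamard matrix, then `A ⊗ B` is a weak Hadamard matrix (with respect to the
ordering `(a, b) ↦ a * n + b` of the product index set). -/
theorem kronecker_weak_hadamard {m n : ℕ}
    (A : Matrix (Fin m) (Fin m) ℝ) (B : Matrix (Fin n) (Fin n) ℝ)
    (hAent : ∀ i j, A i j = -1 ∨ A i j = 0 ∨ A i j = 1)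
    (hAtri : TridiagFin (Aᵀ * A))
    (hAorth : ∀ j k : Fin m, j ≠ k → Aᵀ j ⬝ᵥ Aᵀ k = 0)
    (hBent : ∀ i j, B i j = -1 ∨ B i j = 0 ∨ B i j = 1)
    (hBtri : TridiagFin (Bᵀ * B)) :
    (∀ p q, (A ⊗ₖ B) p q = -1 ∨ (A ⊗ₖ B) p q = 0 ∨ (A ⊗ₖ B) p q = 1) ∧
      (∀ p q : Fin m × Fin n,
        ((p.1 : ℕ) * n + (p.2 : ℕ) + 1 < (q.1 : ℕ) * n + (q.2 : ℕ) ∨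
          (q.1 : ℕ) * n + (q.2 : ℕ) + 1 < (p.1 : ℕ) * n + (p.2 : ℕ)) →
        ((A ⊗ₖ B)ᵀ * (A ⊗ₖ B)) p q = 0) :=
  kronecker_weak_hadamard_general A B hAent hAorth hBent hBtri
end

section
/- The Kronecker product of a Hadamard matrix and a weak Hadamard matrix is a weak Hadamard matrix. -/
open Matrix Kronecker

/-! Since `(H ⊗ P)ᵀ (H ⊗ P) = (Hᵀ H) ⊗ (Pᵀ P) = (m • 1) ⊗ (Pᵀ P)`, the Gram matrix of the
Kronecker product is block diagonal with tridiagonal blocks, hence tridiagonal in the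
ordering `(a, b) ↦ a * n + b`. Entries are products of a `±1` and a `{-1, 0, 1}` entry. -/

theorem mul_eq_neg_one_or_zero_or_one {R : Type*} [Ring R] {a b : R}
    (ha : a = -1 ∨ a = 0 ∨ a = 1) (hb : b = -1 ∨ b = 0 ∨ b = 1) :
    a * b = -1 ∨ a * b = 0 ∨ a * b = 1 := by
  rcases ha with rfl | rfl | rfl <;> rcases hb with rfl | rfl | rfl <;> simp

theorem Matrix.transpose_kronecker_mul_kronecker {R l m n : Type*} [CommSemiring R]
    [Fintype l] [Fintype n] (A : Matrix l m R) (B : Matrix n n R) :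
    (A ⊗ₖ B)ᵀ * (A ⊗ₖ B) = (Aᵀ * A) ⊗ₖ (Bᵀ * B) := by
  rw [mul_kronecker_mul, kroneckerMap_transpose]

theorem Matrix.IsDiag.kronecker_apply_eq_zero_of_tridiagFin {m n : ℕ}
    {A : Matrix (Fin m) (Fin m) ℝ} {B : Matrix (Fin n) (Fin n) ℝ}
    (hA : A.IsDiag) (hB : TridiagFin B) (p q : Fin m × Fin n)
    (hpq : (p.1 : ℕ) * n + (p.2 : ℕ) + 1 < (q.1 : ℕ) * n + (q.2 : ℕ) ∨
      (q.1 : ℕ) * n + (q.2 : ℕ) + 1 < (p.1 : ℕ) * n + (p.2 : ℕ)) :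
    (A ⊗ₖ B) p q = 0 := by
  rw [kronecker_apply]
  by_cases h1 : p.1 = q.1
  · rw [h1] at hpq
    rw [hB p.2 q.2 (by omega), mul_zero]
  · rw [hA h1, zero_mul]

/-- The Kronecker product of a Hadamard matrix and a weak Hadamard matrix is a
weak Hadamard matrix (with respect to the ordering `(a, b) ↦ a * n + b` of the
product index set). -/
theorem hadamard_kronecker_weak_hadamard {m n : ℕ}
    (H : Matrix (Fin m) (Fin m) ℝ) (P : Matrix (Fin n) (Fin n) ℝ)
    (hHent : ∀ i j, H i j = 1 ∨ H i j = -1)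
    (hH : Hᵀ * H = (m : ℝ) • (1 : Matrix (Fin m) (Fin m) ℝ))
    (hPent : ∀ i j, P i j = -1 ∨ P i j = 0 ∨ P i j = 1)
    (hPtri : TridiagFin (Pᵀ * P)) :
    (∀ p q, (H ⊗ₖ P) p q = -1 ∨ (H ⊗ₖ P) p q = 0 ∨ (H ⊗ₖ P) p q = 1) ∧
      (∀ p q : Fin m × Fin n,
        ((p.1 : ℕ) * n + (p.2 : ℕ) + 1 < (q.1 : ℕ) * n + (q.2 : ℕ) ∨
          (q.1 : ℕ) * n + (q.2 : ℕ) + 1 < (p.1 : ℕ) * n + (p.2 : ℕ)) →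
        ((H ⊗ₖ P)ᵀ * (H ⊗ₖ P)) p q = 0) := by
  refine ⟨fun p q => ?_, fun p q hpq => ?_⟩
  · have hH' : H p.1 q.1 = -1 ∨ H p.1 q.1 = 0 ∨ H p.1 q.1 = 1 := by
      rcases hHent p.1 q.1 with h | h <;> simp [h]
    exact mul_eq_neg_one_or_zero_or_one hH' (hPent p.2 q.2)
  · rw [transpose_kronecker_mul_kronecker, hH]
    exact (isDiag_smul_one _ _).kronecker_apply_eq_zero_of_tridiagFin hPtri p q hpq
end

section
/- Let G and H be square {-1,0,1}-matrices of the same size such that H^T H + G^T G is tridiagonal and H^T G = G^T H. Then the block matrix [[H, G],[G, -H]] is a weak Hadamard matrix. -/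
/-!
Since `Hᵀ G = Gᵀ H`, the off-diagonal blocks of the Gram matrix of `[[H, G], [G, -H]]` cancel and
both diagonal blocks equal the tridiagonal matrix `Hᵀ H + Gᵀ G`. Ordering the indices by `encSum`
places the two blocks consecutively, so this block-diagonal matrix is tridiagonal again.
-/

open Matrix

/-- Encoding of the two-block index set `Fin n ⊕ Fin n` into `ℕ`, listing the
first block before the second. -/
def encSum {n : ℕ} : Fin n ⊕ Fin n → ℕ :=
  Sum.elim (fun i => (i : ℕ)) fun i => n + (i : ℕ)

def IsTridiagonalAlong {ι R : Type*} [Zero R] (e : ι → ℕ) (A : Matrix ι ι R) : Prop :=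
  ∀ p q, e p + 1 < e q ∨ e q + 1 < e p → A p q = 0

lemma IsTridiagonalAlong.fromBlocks_zero {n : ℕ} {R : Type*} [Zero R]
    {A D : Matrix (Fin n) (Fin n) R} (hA : IsTridiagonalAlong Fin.val A)
    (hD : IsTridiagonalAlong Fin.val D) :
    IsTridiagonalAlong encSum (fromBlocks A 0 0 D) := by
  rintro (i | i) (j | j) h <;> simp only [encSum, Sum.elim_inl, Sum.elim_inr] at h
  · exact hA i j h
  · rfl
  · rfl
  · exact hD i j (by omega)

lemma fromBlocks_apply_of_forall {l m n o α : Type*} {P : α → Prop}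
    {A : Matrix n l α} {B : Matrix n m α} {C : Matrix o l α} {D : Matrix o m α}
    (hA : ∀ i j, P (A i j)) (hB : ∀ i j, P (B i j)) (hC : ∀ i j, P (C i j))
    (hD : ∀ i j, P (D i j)) (p q) : P (fromBlocks A B C D p q) := by
  rcases p with i | i <;> rcases q with j | j
  exacts [hA i j, hB i j, hC i j, hD i j]

lemma neg_eq_neg_one_or_zero_or_one {R : Type*} [Ring R] {x : R}
    (hx : x = -1 ∨ x = 0 ∨ x = 1) : -x = -1 ∨ -x = 0 ∨ -x = 1 := by
  rcases hx with rfl | rfl | rfl <;> simp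

lemma fromBlocks_transpose_mul_self_of_transpose_mul_comm {m n R : Type*} [Fintype m]
    [Ring R] {G H : Matrix m n R} (hcomm : Hᵀ * G = Gᵀ * H) :
    (fromBlocks H G G (-H))ᵀ * fromBlocks H G G (-H) =
      fromBlocks (Hᵀ * H + Gᵀ * G) 0 0 (Hᵀ * H + Gᵀ * G) := by
  rw [fromBlocks_transpose, fromBlocks_multiply, transpose_neg]
  congr 1
  · rw [Matrix.mul_neg, hcomm, add_neg_cancel]
  · rw [Matrix.neg_mul, ← hcomm, add_neg_cancel]
  · rw [Matrix.neg_mul, Matrix.mul_neg, neg_neg, add_comm]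

/-- If `G, H` are `{-1,0,1}`-matrices with `Hᵀ H + Gᵀ G` tridiagonal and
`Hᵀ G = Gᵀ H`, then the block matrix `[[H, G], [G, -H]]` is a weak Hadamard
matrix. -/
theorem block_weak_hadamard {n : ℕ} (G H : Matrix (Fin n) (Fin n) ℝ)
    (hGent : ∀ i j, G i j = -1 ∨ G i j = 0 ∨ G i j = 1)
    (hHent : ∀ i j, H i j = -1 ∨ H i j = 0 ∨ H i j = 1)
    (htri : ∀ i j : Fin n, ((i : ℕ) + 1 < (j : ℕ) ∨ (j : ℕ) + 1 < (i : ℕ)) →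
      (Hᵀ * H + Gᵀ * G) i j = 0)
    (hcomm : Hᵀ * G = Gᵀ * H) :
    (∀ p q, (Matrix.fromBlocks H G G (-H)) p q = -1 ∨
        (Matrix.fromBlocks H G G (-H)) p q = 0 ∨
        (Matrix.fromBlocks H G G (-H)) p q = 1) ∧
      (∀ p q : Fin n ⊕ Fin n, (encSum p + 1 < encSum q ∨ encSum q + 1 < encSum p) →
        ((Matrix.fromBlocks H G G (-H))ᵀ * Matrix.fromBlocks H G G (-H)) p q = 0) := by
  refine ⟨fromBlocks_apply_of_forall (P := fun x => x = -1 ∨ x = 0 ∨ x = 1) hHent hGent hGent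
    fun i j => neg_eq_neg_one_or_zero_or_one (hHent i j), ?_⟩
  rw [fromBlocks_transpose_mul_self_of_transpose_mul_comm hcomm]
  exact IsTridiagonalAlong.fromBlocks_zero htri htri
end

section
/- Let G and H be n×n weak Hadamard matrices whose first columns both equal a vector x, where x is orthogonal to every other column of G and of H. Let X be the n×n matrix with first column x and all other columns zero. Then the block matrix P = [[H, X],[X, -G]] is a weak Hadamard matrix. Moreover, if G and H each have pairwise orthogonal columns, then so does P. -/
/-!
Write `X` for the matrix whose only nonzero column is `x`, in position `i₀`. Since `x` is the
`i₀`-th column of `H` and orthogonal to the others, `Hᵀ X` is `x ⬝ᵥ x` at `(i₀, i₀)` and zero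
elsewhere; the same holds for `Gᵀ X` and for `Xᵀ X`, so `Hᵀ X = Xᵀ X = Xᵀ G`. Hence in
`Pᵀ P = [[Hᵀ H + Xᵀ X, Hᵀ X - Xᵀ G], [Xᵀ H - Gᵀ X, Xᵀ X + Gᵀ G]]`
the off-diagonal blocks vanish, and the diagonal blocks differ from `Hᵀ H` and `Gᵀ G` only in
the diagonal entry `(i₀, i₀)`. So every off-diagonal zero of `Hᵀ H` and `Gᵀ G` survives in `Pᵀ P`.
-/

open Matrix

namespace Matrix

variable {m ι R : Type*}

theorem fromBlocks_transpose_mul_self [Fintype m] [Fintype ι] [NonUnitalNonAssocRing R]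
    (H X G : Matrix m ι R) :
    (fromBlocks H X X (-G))ᵀ * fromBlocks H X X (-G) =
      fromBlocks (Hᵀ * H + Xᵀ * X) (Hᵀ * X - Xᵀ * G) (Xᵀ * H - Gᵀ * X) (Xᵀ * X + Gᵀ * G) := by
  rw [fromBlocks_transpose, fromBlocks_multiply]
  simp [sub_eq_add_neg]

variable [DecidableEq ι]

def singleCol [Zero R] (i₀ : ι) (x : m → R) : Matrix m ι R :=
  of fun i j => if j = i₀ then x i else 0

theorem fromBlocks_singleCol_apply [Ring R] {s : R → Prop} (h0 : s 0) (hneg : ∀ a, s a → s (-a))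
    {H G : Matrix m ι R} (hH : ∀ i j, s (H i j)) (hG : ∀ i j, s (G i j)) {i₀ : ι}
    {x : m → R} (hx : ∀ i, s (x i)) :
    ∀ p q, s (fromBlocks H (singleCol i₀ x) (singleCol i₀ x) (-G) p q) := by
  have hX : ∀ i j, s (singleCol i₀ x i j) := fun i j => by
    simp only [singleCol, of_apply]
    split_ifs
    exacts [hx i, h0]
  rintro (i | i) (j | j)
  exacts [hH i j, hX i j, hX i j, hneg _ (hG i j)]

section Gram

variable [Fintype m] {i₀ : ι} {x : m → R}

section CommSemiring

variable [CommSemiring R]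

theorem transpose_mul_singleCol_apply (M : Matrix m ι R) (j k : ι) :
    (Mᵀ * singleCol i₀ x) j k = if k = i₀ then Mᵀ j ⬝ᵥ x else 0 := by
  split_ifs with hk <;> simp [singleCol, mul_apply, dotProduct, hk]

theorem transpose_mul_singleCol_of_col {M : Matrix m ι R} (hcol : ∀ i, M i i₀ = x i)
    (horth : ∀ j, j ≠ i₀ → x ⬝ᵥ Mᵀ j = 0) :
    Mᵀ * singleCol i₀ x = single i₀ i₀ (x ⬝ᵥ x) := by
  ext j k
  rw [transpose_mul_singleCol_apply]
  by_cases hj : j = i₀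
  · subst hj
    have : Mᵀ j = x := funext hcol
    simp [this, single_apply, eq_comm]
  · rw [single_apply_of_row_ne (Ne.symm hj), dotProduct_comm, horth j hj, ite_self]

theorem singleCol_transpose_mul_singleCol :
    (singleCol i₀ x)ᵀ * singleCol i₀ x = single i₀ i₀ (x ⬝ᵥ x) :=
  transpose_mul_singleCol_of_col (by simp [singleCol]) fun j hj => by
    simp [singleCol, dotProduct, transpose_apply, hj]

end CommSemiring

variable [Fintype ι] [CommRing R]

theorem fromBlocks_singleCol_transpose_mul_self {H G : Matrix m ι R}
    (hHcol : ∀ i, H i i₀ = x i) (hHorth : ∀ j, j ≠ i₀ → x ⬝ᵥ Hᵀ j = 0)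
    (hGcol : ∀ i, G i i₀ = x i) (hGorth : ∀ j, j ≠ i₀ → x ⬝ᵥ Gᵀ j = 0) :
    let X := singleCol i₀ x
    (fromBlocks H X X (-G))ᵀ * fromBlocks H X X (-G) =
      fromBlocks (Hᵀ * H + single i₀ i₀ (x ⬝ᵥ x)) 0 0 (Gᵀ * G + single i₀ i₀ (x ⬝ᵥ x)) := by
  intro X
  have hH : Hᵀ * X = single i₀ i₀ (x ⬝ᵥ x) := transpose_mul_singleCol_of_col hHcol hHorth
  have hG : Gᵀ * X = single i₀ i₀ (x ⬝ᵥ x) := transpose_mul_singleCol_of_col hGcol hGorth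
  have hXG : Xᵀ * G = single i₀ i₀ (x ⬝ᵥ x) := by
    rw [← transpose_transpose (Xᵀ * G), transpose_mul, transpose_transpose, hG,
      transpose_single]
  have hXH : Xᵀ * H = single i₀ i₀ (x ⬝ᵥ x) := by
    rw [← transpose_transpose (Xᵀ * H), transpose_mul, transpose_transpose, hH,
      transpose_single]
  rw [fromBlocks_transpose_mul_self, singleCol_transpose_mul_singleCol, hH, hG, hXG, hXH,
    sub_self, add_comm (single i₀ i₀ (x ⬝ᵥ x)) (Gᵀ * G)]

theorem fromBlocks_singleCol_transpose_mul_self_apply_eq_zero {H G : Matrix m ι R}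
    (hHcol : ∀ i, H i i₀ = x i) (hHorth : ∀ j, j ≠ i₀ → x ⬝ᵥ Hᵀ j = 0)
    (hGcol : ∀ i, G i i₀ = x i) (hGorth : ∀ j, j ≠ i₀ → x ⬝ᵥ Gᵀ j = 0)
    (S : ι ⊕ ι → ι ⊕ ι → Prop) (hS : ∀ p, ¬ S p p)
    (hSH : ∀ j k, S (.inl j) (.inl k) → (Hᵀ * H) j k = 0)
    (hSG : ∀ j k, S (.inr j) (.inr k) → (Gᵀ * G) j k = 0) :
    let X := singleCol i₀ x
    ∀ p q, S p q → ((fromBlocks H X X (-G))ᵀ * fromBlocks H X X (-G)) p q = 0 := by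
  intro X p q hpq
  have hoff : ∀ {j k : ι}, j ≠ k → single i₀ i₀ (x ⬝ᵥ x) j k = 0 := fun hjk =>
    single_apply_of_ne _ _ _ _ _ fun h => hjk (h.1.symm.trans h.2)
  rw [fromBlocks_singleCol_transpose_mul_self hHcol hHorth hGcol hGorth]
  rcases p with j | j <;> rcases q with k | k
  · have hjk : j ≠ k := by rintro rfl; exact hS _ hpq
    rw [fromBlocks_apply₁₁, add_apply, hSH j k hpq, hoff hjk, add_zero]
  · rfl
  · rfl
  · have hjk : j ≠ k := by rintro rfl; exact hS _ hpq
    rw [fromBlocks_apply₂₂, add_apply, hSG j k hpq, hoff hjk, add_zero]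

end Gram

end Matrix

/-- Let `G` and `H` be weak Hadamard matrices whose first columns both equal `x`,
with `x` orthogonal to every other column of `G` and of `H`, and let `X` have
first column `x` and all other columns zero. Then `P = [[H, X], [X, -G]]` is a
weak Hadamard matrix; moreover if `G` and `H` have pairwise orthogonal columns,
then so does `P`. -/
theorem block_weak_hadamard_with_column {n : ℕ} (hn : 0 < n)
    (G H : Matrix (Fin n) (Fin n) ℝ) (x : Fin n → ℝ)
    (hGent : ∀ i j, G i j = -1 ∨ G i j = 0 ∨ G i j = 1)
    (hHent : ∀ i j, H i j = -1 ∨ H i j = 0 ∨ H i j = 1)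
    (hGtri : ∀ i j : Fin n, ((i : ℕ) + 1 < (j : ℕ) ∨ (j : ℕ) + 1 < (i : ℕ)) →
      (Gᵀ * G) i j = 0)
    (hHtri : ∀ i j : Fin n, ((i : ℕ) + 1 < (j : ℕ) ∨ (j : ℕ) + 1 < (i : ℕ)) →
      (Hᵀ * H) i j = 0)
    (hGx : ∀ i, G i ⟨0, hn⟩ = x i)
    (hHx : ∀ i, H i ⟨0, hn⟩ = x i)
    (hGorth : ∀ j : Fin n, j ≠ ⟨0, hn⟩ → x ⬝ᵥ Gᵀ j = 0)
    (hHorth : ∀ j : Fin n, j ≠ ⟨0, hn⟩ → x ⬝ᵥ Hᵀ j = 0) :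
    let X : Matrix (Fin n) (Fin n) ℝ :=
      Matrix.of fun i j => if j = (⟨0, hn⟩ : Fin n) then x i else 0
    let P := Matrix.fromBlocks H X X (-G)
    (∀ p q, P p q = -1 ∨ P p q = 0 ∨ P p q = 1) ∧
      (∀ p q : Fin n ⊕ Fin n, (encSum p + 1 < encSum q ∨ encSum q + 1 < encSum p) →
        (Pᵀ * P) p q = 0) ∧
      (((∀ j k : Fin n, j ≠ k → Hᵀ j ⬝ᵥ Hᵀ k = 0) ∧
          (∀ j k : Fin n, j ≠ k → Gᵀ j ⬝ᵥ Gᵀ k = 0)) →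
        ∀ p q : Fin n ⊕ Fin n, p ≠ q → Pᵀ p ⬝ᵥ Pᵀ q = 0) := by
  intro X P
  have hzero := fromBlocks_singleCol_transpose_mul_self_apply_eq_zero hHx hHorth hGx hGorth
  refine ⟨?_, ?_, ?_⟩
  · refine fromBlocks_singleCol_apply (s := fun a : ℝ => a = -1 ∨ a = 0 ∨ a = 1) (by norm_num)
      (fun a ha => ?_) hHent hGent fun i => hGx i ▸ hGent i _
    rcases ha with rfl | rfl | rfl <;> norm_num
  · refine hzero _ (fun p => by omega) (fun j k h => hHtri j k ?_) (fun j k h => hGtri j k ?_) <;>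
      simp only [encSum, Sum.elim_inl, Sum.elim_inr] at h <;> omega
  · rintro ⟨hHo, hGo⟩ p q hpq
    exact hzero (· ≠ ·) (fun _ h => h rfl) (fun j k h => hHo j k (by simpa using h))
      (fun j k h => hGo j k (by simpa using h)) p q hpq
end

section
/- Let L be the Laplacian of an integer-weighted graph on n vertices. If x is an eigenvector of L with entries in {-1,1} (no zero entries) and eigenvalue λ, then λ is an even integer. -/
open Matrix Finset

/-! Read off row `i` of `L x = λ x` and multiply by `x i = ±1`: since `x i ^ 2 = 1`,
`λ = ∑ j, A i j * (1 - x i * x j)`, and each `1 - x i * x j` is `0` or `2`. So `λ` is twice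
the total weight of the edges at `i` whose endpoints carry opposite signs. -/

namespace Matrix

variable {ι R : Type*} [Fintype ι]

def weightedLaplacian [DecidableEq ι] [AddCommGroup R] (A : Matrix ι ι R) : Matrix ι ι R :=
  diagonal (fun i => ∑ k, A i k) - A

theorem of_ite_sum_sub_eq_weightedLaplacian_map [DecidableEq ι] [Ring R] (A : Matrix ι ι ℤ) :
    (of fun i j => ((if i = j then ∑ k, A i k else 0 : ℤ) : R) - (A i j : R)) =
      weightedLaplacian (A.map (↑)) := by
  ext i j
  by_cases h : i = j <;> simp [weightedLaplacian, h]

theorem weightedLaplacian_mulVec_apply_mul [DecidableEq ι] [CommRing R] (A : Matrix ι ι R)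
    (x : ι → R) {i : ι} (hxi : x i * x i = 1) :
    (weightedLaplacian A *ᵥ x) i * x i = ∑ j, A i j * (1 - x i * x j) := by
  rw [weightedLaplacian, sub_mulVec, Pi.sub_apply, mulVec_diagonal, sub_mul, mul_assoc, hxi,
    mul_one, mulVec, dotProduct, sum_mul]
  simp only [mul_sub, mul_one, sum_sub_distrib]
  congr 1
  exact sum_congr rfl fun j _ => by ring

end Matrix

theorem one_sub_mul_eq_ite {R : Type*} [Ring R] {a b : R} [Decidable (a = b)]
    (ha : a = 1 ∨ a = -1) (hb : b = 1 ∨ b = -1) :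
    1 - a * b = if a = b then 0 else 2 := by
  rcases ha with rfl | rfl <;> rcases hb with rfl | rfl <;> split_ifs with h <;> grind

theorem laplacian_eigenvalue_even_of_pm_one_eigenvector_general {n : ℕ} (hn : 0 < n)
    (A : Matrix (Fin n) (Fin n) ℤ)
    (x : Fin n → ℝ)
    (hx : ∀ i, x i = 1 ∨ x i = -1)
    (lam : ℝ)
    (heig : (Matrix.of fun i j =>
        ((if i = j then ∑ k, A i k else 0 : ℤ) : ℝ) - (A i j : ℝ)).mulVec x
      = lam • x) :
    ∃ m : ℤ, lam = 2 * (m : ℝ) := by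
  classical
  let i : Fin n := ⟨0, hn⟩
  have hxi : x i * x i = 1 := mul_self_eq_one_iff.mpr (hx i)
  refine ⟨∑ j with x i ≠ x j, A i j, ?_⟩
  calc lam = (lam • x) i * x i := by rw [Pi.smul_apply, smul_eq_mul, mul_assoc, hxi, mul_one]
    _ = (weightedLaplacian (A.map (↑)) *ᵥ x) i * x i := by
      rw [← heig, of_ite_sum_sub_eq_weightedLaplacian_map]
    _ = ∑ j, (A i j : ℝ) * (1 - x i * x j) := weightedLaplacian_mulVec_apply_mul _ x hxi
    _ = ∑ j, (A i j : ℝ) * if x i = x j then 0 else 2 := by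
      simp_rw [one_sub_mul_eq_ite (hx i) (hx _)]
    _ = 2 * ((∑ j with x i ≠ x j, A i j : ℤ) : ℝ) := by
      push_cast
      rw [sum_filter, mul_sum]
      exact sum_congr rfl fun j _ => by by_cases h : x i = x j <;> simp [h, mul_comm]

/-- If the Laplacian `L = D - A` of an integer-weighted graph has an eigenvector
with all entries `±1` and eigenvalue `λ`, then `λ` is an even integer. -/
theorem laplacian_eigenvalue_even_of_pm_one_eigenvector {n : ℕ} (hn : 0 < n)
    (A : Matrix (Fin n) (Fin n) ℤ)
    (hsymm : Aᵀ = A)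
    (hdiag : ∀ i, A i i = 0)
    (x : Fin n → ℝ)
    (hx : ∀ i, x i = 1 ∨ x i = -1)
    (lam : ℝ)
    (heig : (Matrix.of fun i j =>
        ((if i = j then ∑ k, A i k else 0 : ℤ) : ℝ) - (A i j : ℝ)).mulVec x
      = lam • x) :
    ∃ m : ℤ, lam = 2 * (m : ℝ) :=
  laplacian_eigenvalue_even_of_pm_one_eigenvector_general hn A x hx lam heig
end

section
/- Let L_X, L_Y be Laplacians of weighted graphs on n vertices both diagonalized by S (first column all-ones, others orthogonal to it), with diagonal forms Λ_1 = diag(0,λ_2,...,λ_n) and Λ_2 = diag(0,θ_2,...,θ_n). If Y is k-regular (D(Y) = kI), then the merge Laplacian M = [[w₁L_X + w₂D_Y, -w₂A_Y],[-w₂A_Y, w₁L_X + w₂D_Y]] is diagonalized by [[S,S],[S,-S]], with resulting diagonal diag(0, w₁λ_2+w₂θ_2, ..., w₁λ_n+w₂θ_n, 2w₂k, w₁λ_2+w₂(2k-θ_2), ..., w₁λ_n+w₂(2k-θ_n)). -/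
/-!
If `S⁻¹ A S = D` and `S⁻¹ B S = E` are diagonal, then `T = [[S, S], [S, -S]]` intertwines the
symmetric block matrix `[[A, B], [B, A]]` with `diag(D + E, D - E)`. For the merge Laplacian,
`A = w₁L_X + w₂k I` and `B = -w₂A_Y = w₂(L_Y - k I)`, giving `D + E = w₁Λ₁ + w₂Λ₂` and
`D - E = w₁Λ₁ + w₂(2k I - Λ₂)`; the zero first entries of `Λ₁, Λ₂` produce `0` and `2w₂k`.
-/

open Matrix

namespace Matrix

variable {n R : Type*} [Fintype n]

theorem inv_mul_mul_eq_iff_mul_eq_mul [DecidableEq n] [CommRing R] {S : Matrix n n R}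
    (hS : IsUnit S) (A B : Matrix n n R) : S⁻¹ * A * S = B ↔ A * S = S * B := by
  have := hS.invertible
  rw [Matrix.mul_assoc, inv_mul_eq_iff_eq_mul_of_invertible]

theorem fromBlocks_mul_fromBlocks_self_neg [Ring R] {A B S D E : Matrix n n R}
    (hA : A * S = S * D) (hB : B * S = S * E) :
    fromBlocks A B B A * fromBlocks S S S (-S) =
      fromBlocks S S S (-S) * fromBlocks (D + E) 0 0 (D - E) := by
  simp only [fromBlocks_multiply, Matrix.mul_neg, Matrix.neg_mul, Matrix.mul_add,
    Matrix.mul_sub, Matrix.mul_zero, hA, hB]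
  congr 1 <;> abel

theorem isUnit_fromBlocks_self_neg [DecidableEq n] [Field R] {S : Matrix n n R} (hS : IsUnit S)
    (h2 : (2 : R) ≠ 0) : IsUnit (fromBlocks S S S (-S)) := by
  refine .of_mul_eq_one ((2⁻¹ : R) • fromBlocks S⁻¹ S⁻¹ S⁻¹ (-S⁻¹)) ?_
  have hSS : S * S⁻¹ = 1 := mul_nonsing_inv S ((isUnit_iff_isUnit_det S).1 hS)
  rw [Matrix.mul_smul, fromBlocks_multiply, ← fromBlocks_one]
  simp only [Matrix.mul_neg, Matrix.neg_mul, neg_neg, hSS, add_neg_cancel, fromBlocks_smul,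
    smul_zero, ← two_smul R (1 : Matrix n n R), smul_smul, inv_mul_cancel₀ h2, one_smul]

end Matrix

theorem merge_diagonalization_general {n : ℕ} [NeZero n]
    (LX AY S : Matrix (Fin n) (Fin n) ℝ) (k w1 w2 : ℝ)
    (hSinv : IsUnit S)
    (d1 d2 : Fin n → ℝ) (hd10 : d1 0 = 0) (hd20 : d2 0 = 0)
    (hX : S⁻¹ * LX * S = Matrix.diagonal d1)
    (hY : S⁻¹ * (k • (1 : Matrix (Fin n) (Fin n) ℝ) - AY) * S = Matrix.diagonal d2) :
    let M := Matrix.fromBlocks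
      (w1 • LX + (w2 * k) • (1 : Matrix (Fin n) (Fin n) ℝ)) (-(w2 • AY))
      (-(w2 • AY)) (w1 • LX + (w2 * k) • (1 : Matrix (Fin n) (Fin n) ℝ))
    let T := Matrix.fromBlocks S S S (-S)
    T⁻¹ * M * T = Matrix.diagonal (Sum.elim
      (fun j => if j = 0 then 0 else w1 * d1 j + w2 * d2 j)
      (fun j => if j = 0 then 2 * w2 * k else w1 * d1 j + w2 * (2 * k - d2 j))) := by
  intro M T
  have hLX := (inv_mul_mul_eq_iff_mul_eq_mul hSinv _ _).1 hX
  have hLY := (inv_mul_mul_eq_iff_mul_eq_mul hSinv _ _).1 hY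
  have hA : (w1 • LX + (w2 * k) • 1) * S = S * (w1 • diagonal d1 + (w2 * k) • 1) := by
    simp only [Matrix.add_mul, Matrix.mul_add, Matrix.smul_mul, Matrix.mul_smul, hLX,
      Matrix.one_mul, Matrix.mul_one]
  have hB : -(w2 • AY) * S = S * (w2 • diagonal d2 - (w2 * k) • 1) := by
    rw [Matrix.mul_sub, Matrix.mul_smul, ← hLY]
    simp only [Matrix.sub_mul, Matrix.neg_mul, Matrix.smul_mul, Matrix.one_mul, Matrix.mul_smul,
      Matrix.mul_one, smul_sub, smul_smul]
    abel
  rw [(inv_mul_mul_eq_iff_mul_eq_mul (isUnit_fromBlocks_self_neg hSinv two_ne_zero) _ _).2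
    (fromBlocks_mul_fromBlocks_self_neg hA hB)]
  simp only [smul_one_eq_diagonal, ← diagonal_smul, diagonal_add, diagonal_sub,
    fromBlocks_diagonal]
  congr 1
  ext (j | j) <;> by_cases hj : j = 0 <;> simp [hj, hd10, hd20] <;> ring

/-- If `L_X` and `L_Y = k•1 - A_Y` (with `Y` `k`-regular, so `D_Y = k•1`) are both
diagonalized by `S` (first column all-ones, other columns orthogonal to it), with
diagonal forms `diag(0, λ₂, …, λₙ)` and `diag(0, θ₂, …, θₙ)`, then the merge
Laplacian is diagonalized by `[[S, S], [S, -S]]` with resulting diagonal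
`diag(0, w₁λ₂+w₂θ₂, …, 2w₂k, w₁λ₂+w₂(2k-θ₂), …)`. -/
theorem merge_diagonalization {n : ℕ} [NeZero n]
    (LX AY S : Matrix (Fin n) (Fin n) ℝ) (k w1 w2 : ℝ)
    (hSinv : IsUnit S)
    (hSone : ∀ i, S i 0 = 1)
    (horth : ∀ j : Fin n, j ≠ 0 → ∑ i, S i j = 0)
    (d1 d2 : Fin n → ℝ) (hd10 : d1 0 = 0) (hd20 : d2 0 = 0)
    (hX : S⁻¹ * LX * S = Matrix.diagonal d1)
    (hY : S⁻¹ * (k • (1 : Matrix (Fin n) (Fin n) ℝ) - AY) * S = Matrix.diagonal d2) :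
    let M := Matrix.fromBlocks
      (w1 • LX + (w2 * k) • (1 : Matrix (Fin n) (Fin n) ℝ)) (-(w2 • AY))
      (-(w2 • AY)) (w1 • LX + (w2 * k) • (1 : Matrix (Fin n) (Fin n) ℝ))
    let T := Matrix.fromBlocks S S S (-S)
    T⁻¹ * M * T = Matrix.diagonal (Sum.elim
      (fun j => if j = 0 then 0 else w1 * d1 j + w2 * d2 j)
      (fun j => if j = 0 then 2 * w2 * k else w1 * d1 j + w2 * (2 * k - d2 j))) :=
  merge_diagonalization_general LX AY S k w1 w2 hSinv d1 d2 hd10 hd20 hX hY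
end
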